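/- arXiv:2402.16528 — 2 statements merged into one kernel-verified Lean document; each statement's English description precedes it below -/
import Mathlib

section
/- Let {ψ_k}_{k=1}^n be compatible with control from Ω (constants ρ, τ), λ > 0, h > 0 small, φ_k = e^{λψ_k}, and let χ_k be cutoffs with χ_k = 1 on {|∇ψ_k| ≥ ρ}, 0 ≤ χ_k ≤ 1. Then for h ≤ h₀(λ, τ, inf ψ_k, sup ψ_k) and every x ∈ M \ Ω: ∑_k e^{φ_k(x)/h} χ_k(x) ≥ (1/(2n)) ∑_k e^{φ_k(x)/h}. -/
open scoped BigOperators

/-- With compatible weights `{ψ_k}` (uniformly bounded), `φ_k = e^{λψ_k}` and cutoffs `χ_k = 1`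
on `{‖∇ψ_k‖ ≥ ρ}`, for all sufficiently small `h > 0` and every `x ∈ M \ Ω`,
`∑_k e^{φ_k/h} χ_k ≥ (1/(2n)) ∑_k e^{φ_k/h}`. -/
theorem weighted_cutoff_sum_lower_bound {E : Type*} [NormedAddCommGroup E]
    [InnerProductSpace ℝ E] [CompleteSpace E] (n : ℕ) (hn : 0 < n) (Ω : Set E)
    (ψ : Fin n → E → ℝ) (ρ τ lam m M₀ : ℝ) (hρ : 0 < ρ) (hτ : 0 < τ) (hlam : 0 < lam)
    (hbounds : ∀ k x, m ≤ ψ k x ∧ ψ k x ≤ M₀)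
    (hcompat : ∀ x ∉ Ω, ∀ k : Fin n, ‖gradient (ψ k) x‖ < ρ →
      ∃ l : Fin n, ρ ≤ ‖gradient (ψ l) x‖ ∧ ψ k x + τ ≤ ψ l x)
    (χ : Fin n → E → ℝ) (hχ0 : ∀ k x, 0 ≤ χ k x) (hχ1 : ∀ k x, χ k x ≤ 1)
    (hχeq : ∀ k x, ρ ≤ ‖gradient (ψ k) x‖ → χ k x = 1) :
    ∃ h₀ > 0, ∀ h : ℝ, 0 < h → h ≤ h₀ → ∀ x ∉ Ω,
      (1 / (2 * n)) * ∑ k : Fin n, Real.exp (Real.exp (lam * ψ k x) / h) ≤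
        ∑ k : Fin n, Real.exp (Real.exp (lam * ψ k x) / h) * χ k x := by
  classical
  refine ⟨1, one_pos, fun h hh _ x hx => ?_⟩
  set f : Fin n → ℝ := fun k => Real.exp (Real.exp (lam * ψ k x) / h) with hf
  have hfpos : ∀ k, 0 < f k := fun k => Real.exp_pos _
  set A : Finset (Fin n) := Finset.univ.filter (fun k => ρ ≤ ‖gradient (ψ k) x‖) with hA
  have hAne : A.Nonempty := by
    have k₀ : Fin n := ⟨0, hn⟩
    by_cases hk : ρ ≤ ‖gradient (ψ k₀) x‖
    · exact ⟨k₀, Finset.mem_filter.2 ⟨Finset.mem_univ _, hk⟩⟩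
    · obtain ⟨l, hl, _⟩ := hcompat x hx k₀ (not_le.1 hk)
      exact ⟨l, Finset.mem_filter.2 ⟨Finset.mem_univ _, hl⟩⟩
  obtain ⟨l, hlA, hlmax⟩ := A.exists_max_image (fun k => ψ k x) hAne
  have hlρ : ρ ≤ ‖gradient (ψ l) x‖ := (Finset.mem_filter.1 hlA).2
  have hmono : ∀ k : Fin n, ψ k x ≤ ψ l x → f k ≤ f l := by
    intro k hkl
    have : Real.exp (lam * ψ k x) ≤ Real.exp (lam * ψ l x) :=
      Real.exp_le_exp.2 (by nlinarith)
    exact Real.exp_le_exp.2 (div_le_div_of_nonneg_right this hh.le)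
  have hkey : ∀ k ∉ A, f k ≤ f l := by
    intro k hk
    have hk' : ‖gradient (ψ k) x‖ < ρ :=
      not_le.1 fun hle => hk (Finset.mem_filter.2 ⟨Finset.mem_univ _, hle⟩)
    obtain ⟨l', hl', hψ⟩ := hcompat x hx k hk'
    have hl'A : l' ∈ A := Finset.mem_filter.2 ⟨Finset.mem_univ _, hl'⟩
    exact hmono k (le_trans (le_trans (le_add_of_nonneg_right hτ.le) hψ) (hlmax l' hl'A))
  set R : ℝ := ∑ k : Fin n, f k * χ k x with hR
  have hRterm : ∀ k, 0 ≤ f k * χ k x := fun k => mul_nonneg (hfpos k).le (hχ0 k x)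
  have hRnonneg : 0 ≤ R := Finset.sum_nonneg fun k _ => hRterm k
  have hflR : f l ≤ R := by
    have : f l * χ l x ≤ R :=
      Finset.single_le_sum (fun k _ => hRterm k) (Finset.mem_univ l)
    rwa [hχeq l x hlρ, mul_one] at this
  have hsplit : ∑ k : Fin n, f k = ∑ k ∈ A, f k + ∑ k ∈ Aᶜ, f k :=
    (Finset.sum_add_sum_compl A f).symm
  have hApart : ∑ k ∈ A, f k ≤ R := by
    have heq : ∑ k ∈ A, f k = ∑ k ∈ A, f k * χ k x := by
      refine Finset.sum_congr rfl fun k hk => ?_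
      rw [hχeq k x (Finset.mem_filter.1 hk).2, mul_one]
    rw [heq]
    exact Finset.sum_le_sum_of_subset_of_nonneg (Finset.subset_univ A)
      (fun k _ _ => hRterm k)
  have hAcpart : ∑ k ∈ Aᶜ, f k ≤ (n : ℝ) * R := by
    calc ∑ k ∈ Aᶜ, f k ≤ ∑ _k ∈ Aᶜ, f l :=
          Finset.sum_le_sum fun k hk => hkey k (Finset.mem_compl.1 hk)
      _ = (Aᶜ.card : ℝ) * f l := by rw [Finset.sum_const, nsmul_eq_mul]
      _ ≤ (n : ℝ) * R := by
          have hcard : (Aᶜ.card : ℝ) ≤ (n : ℝ) := by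
            exact_mod_cast Finset.card_le_card (Finset.subset_univ Aᶜ) |>.trans
              (le_of_eq (Finset.card_univ.trans (Fintype.card_fin n)))
          exact mul_le_mul hcard hflR (hfpos l).le (Nat.cast_nonneg n)
  have hn1 : (1 : ℝ) ≤ (n : ℝ) := by exact_mod_cast hn
  have h2n : (0 : ℝ) < 2 * n := by positivity
  rw [one_div, inv_mul_le_iff₀ h2n]
  calc ∑ k : Fin n, f k ≤ R + (n : ℝ) * R := by
        rw [hsplit]; exact add_le_add hApart hAcpart
    _ ≤ 2 * n * R := by nlinarith
end

section
/- Under the compatibility condition, with φ_k = e^{λψ_k} and ε = (e^{λτ} − 1) e^{λ m} where m = min_k inf_M ψ_k, for every x ∈ M \ Ω and every k' with |∇ψ_{k'}(x)| < ρ one has e^{φ_{k'}(x)/h} ≤ e^{−ε/h} ∑_{k=1}^n e^{φ_k(x)/h}. -/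
open scoped BigOperators

/-! If `ψ_l ≥ ψ_{k'} + τ`, then `φ_l - φ_{k'} ≥ (e^{λτ} - 1) e^{λψ_{k'}} ≥ ε`, so the single
term `e^{φ_l/h}` of the sum already exceeds `e^{ε/h} e^{φ_{k'}/h}`. -/

namespace Real

lemma exp_mul_sub_exp_mul_ge {lam τ m a b : ℝ} (hlam : 0 ≤ lam) (hτ : 0 ≤ τ) (hma : m ≤ a)
    (hab : a + τ ≤ b) :
    (exp (lam * τ) - 1) * exp (lam * m) ≤ exp (lam * b) - exp (lam * a) := by
  have hgap : 0 ≤ exp (lam * τ) - 1 := sub_nonneg.2 (one_le_exp (mul_nonneg hlam hτ))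
  have hshift : exp (lam * τ) * exp (lam * a) ≤ exp (lam * b) := by
    rw [← exp_add, ← mul_add, add_comm]
    exact exp_le_exp.2 (mul_le_mul_of_nonneg_left hab hlam)
  calc (exp (lam * τ) - 1) * exp (lam * m)
      ≤ (exp (lam * τ) - 1) * exp (lam * a) :=
        mul_le_mul_of_nonneg_left (exp_le_exp.2 (mul_le_mul_of_nonneg_left hma hlam)) hgap
    _ ≤ exp (lam * b) - exp (lam * a) := by linarith

lemma exp_div_le_exp_neg_div_mul_exp_div {ε u v h : ℝ} (hh : 0 ≤ h) (huv : ε + u ≤ v) :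
    exp (u / h) ≤ exp (-ε / h) * exp (v / h) := by
  rw [← exp_add, ← add_div]
  exact exp_le_exp.2 (div_le_div_of_nonneg_right (by linarith) hh)

end Real

theorem small_gradient_weight_dominated_general {E : Type*} [NormedAddCommGroup E]
    [InnerProductSpace ℝ E] [CompleteSpace E] (n : ℕ) (Ω : Set E)
    (ψ : Fin n → E → ℝ) (ρ τ lam m : ℝ) (hτ : 0 < τ) (hlam : 0 < lam)
    (hm : ∀ k x, m ≤ ψ k x)
    (hcompat : ∀ x ∉ Ω, ∀ k : Fin n, ‖gradient (ψ k) x‖ < ρ →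
      ∃ l : Fin n, ρ ≤ ‖gradient (ψ l) x‖ ∧ ψ k x + τ ≤ ψ l x) :
    ∀ h : ℝ, 0 < h → ∀ x ∉ Ω, ∀ k' : Fin n, ‖gradient (ψ k') x‖ < ρ →
      Real.exp (Real.exp (lam * ψ k' x) / h) ≤
        Real.exp (-((Real.exp (lam * τ) - 1) * Real.exp (lam * m)) / h) *
          ∑ k : Fin n, Real.exp (Real.exp (lam * ψ k x) / h) := by
  intro h hh x hx k' hk'
  obtain ⟨l, -, hl⟩ := hcompat x hx k' hk'
  have hgap := Real.exp_mul_sub_exp_mul_ge hlam.le hτ.le (hm k' x) hl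
  calc Real.exp (Real.exp (lam * ψ k' x) / h)
      ≤ Real.exp (-((Real.exp (lam * τ) - 1) * Real.exp (lam * m)) / h) *
          Real.exp (Real.exp (lam * ψ l x) / h) :=
        Real.exp_div_le_exp_neg_div_mul_exp_div hh.le (by linarith)
    _ ≤ _ := by
        gcongr
        exact Finset.single_le_sum (f := fun k => Real.exp (Real.exp (lam * ψ k x) / h))
          (fun k _ => (Real.exp_pos _).le) (Finset.mem_univ l)

/-- Under the compatibility condition, with `φ_k = e^{λψ_k}`, `m ≤ ψ_k` and
`ε = (e^{λτ} - 1) e^{λm}`: at every `x ∈ M \ Ω` and for every `k'` with `‖∇ψ_{k'}(x)‖ < ρ`,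
`e^{φ_{k'}(x)/h} ≤ e^{-ε/h} ∑_k e^{φ_k(x)/h}`. -/
theorem small_gradient_weight_dominated {E : Type*} [NormedAddCommGroup E]
    [InnerProductSpace ℝ E] [CompleteSpace E] (n : ℕ) (Ω : Set E)
    (ψ : Fin n → E → ℝ) (ρ τ lam m : ℝ) (hρ : 0 < ρ) (hτ : 0 < τ) (hlam : 0 < lam)
    (hm : ∀ k x, m ≤ ψ k x)
    (hcompat : ∀ x ∉ Ω, ∀ k : Fin n, ‖gradient (ψ k) x‖ < ρ →
      ∃ l : Fin n, ρ ≤ ‖gradient (ψ l) x‖ ∧ ψ k x + τ ≤ ψ l x) :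
    ∀ h : ℝ, 0 < h → ∀ x ∉ Ω, ∀ k' : Fin n, ‖gradient (ψ k') x‖ < ρ →
      Real.exp (Real.exp (lam * ψ k' x) / h) ≤
        Real.exp (-((Real.exp (lam * τ) - 1) * Real.exp (lam * m)) / h) *
          ∑ k : Fin n, Real.exp (Real.exp (lam * ψ k x) / h) :=
  small_gradient_weight_dominated_general n Ω ψ ρ τ lam m hτ hlam hm hcompat
end
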